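/- Any φ with p_φ = r globally minimizes the expected contrastive loss: with Y finite, p_data full-support, q strictly positive, r(y) ∝ p_data(y)/q(y), and J(φ) = Σ_{y} p_data(y) E_{C_1,...,C_L ~ q iid}[ -log( exp(φ(y)) / (exp(φ(y)) + Σ_{i=1}^L exp(φ(C_i))) ) ], any φ satisfying exp(φ(y)) = c · p_data(y)/q(y) for some constant c > 0 and all y minimizes J over all φ : Y → ℝ. -/

import Mathlib

open Real Finset

noncomputable def contrastiveJ {Y : Type*} [Fintype Y] [DecidableEq Y]
    (p_data q : Y → ℝ) (L : ℕ) (φ : Y → ℝ) : ℝ :=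
  ∑ y : Y, p_data y *
    ∑ C : Fin (L + 1) → Y,
      (if C 0 = y then ∏ i : Fin L, q (C i.succ) else 0) *
        (-Real.log (Real.exp (φ y) / ∑ i : Fin (L + 1), Real.exp (φ (C i))))

/-! Weighting each tuple `C` of `L + 1` labels by `∏ i, q (C i)` and symmetrising the position
of the positive sample turns `(L + 1) • J(θ)` into a sum over tuples of cross-entropies of the
softmax of `θ ∘ C` against the weights `p_data / q` on `C`. On every tuple `exp ∘ φ` is
proportional to these weights, so the softmax of `φ ∘ C` is their normalisation, and Gibbs'
inequality says that it minimises each of these cross-entropies. -/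

lemma sum_mul_log_le_sum_mul_log_self {ι : Type*} [Fintype ι] {p a : ι → ℝ}
    (hp : ∀ j, 0 < p j) (ha : ∀ j, 0 < a j) (hsum : ∑ j, a j = ∑ j, p j) :
    ∑ j, p j * log (a j) ≤ ∑ j, p j * log (p j) := by
  have hterm : ∀ j, p j * log (a j) - p j * log (p j) ≤ a j - p j := fun j => by
    calc p j * log (a j) - p j * log (p j) = p j * log (a j / p j) := by
          rw [log_div (ha j).ne' (hp j).ne']; ring
      _ ≤ p j * (a j / p j - 1) :=
          mul_le_mul_of_nonneg_left (log_le_sub_one_of_pos (div_pos (ha j) (hp j))) (hp j).le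
      _ = a j - p j := by rw [mul_sub, mul_div_cancel₀ _ (hp j).ne', mul_one]
  have hsum_term := sum_le_sum fun j (_ : j ∈ univ) => hterm j
  rwa [sum_sub_distrib, sum_sub_distrib, hsum, sub_self, sub_nonpos] at hsum_term

section Softmax

variable {ι : Type*} [Fintype ι]

noncomputable def softmax (s : ι → ℝ) (j : ι) : ℝ :=
  exp (s j) / ∑ i, exp (s i)

lemma sum_exp_pos [Nonempty ι] (s : ι → ℝ) : 0 < ∑ i, exp (s i) :=
  sum_pos (fun i _ => exp_pos (s i)) univ_nonempty

lemma softmax_pos [Nonempty ι] (s : ι → ℝ) (j : ι) : 0 < softmax s j :=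
  div_pos (exp_pos _) (sum_exp_pos s)

lemma sum_softmax [Nonempty ι] (s : ι → ℝ) : ∑ j, softmax s j = 1 := by
  simp only [softmax]
  rw [← sum_div, div_self (sum_exp_pos s).ne']

lemma exp_eq_sum_exp_mul_softmax [Nonempty ι] (s : ι → ℝ) (j : ι) :
    exp (s j) = (∑ i, exp (s i)) * softmax s j := by
  rw [softmax, mul_div_cancel₀ _ (sum_exp_pos s).ne']

lemma softmax_comp_perm (s : ι → ℝ) (σ : Equiv.Perm ι) (j : ι) :
    softmax (s ∘ σ) j = softmax s (σ j) := by
  simp only [softmax, Function.comp_apply, Equiv.sum_comp σ fun i => exp (s i)]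

lemma sum_exp_mul_neg_log_softmax_le [Nonempty ι] (s t : ι → ℝ) :
    ∑ j, exp (s j) * -log (softmax s j) ≤ ∑ j, exp (s j) * -log (softmax t j) := by
  have gibbs := sum_mul_log_le_sum_mul_log_self (softmax_pos s) (softmax_pos t)
    (by rw [sum_softmax, sum_softmax])
  have hweights : ∀ u : ι → ℝ, ∑ j, exp (s j) * -log (u j) =
      -((∑ i, exp (s i)) * ∑ j, softmax s j * log (u j)) := fun u => by
    rw [mul_sum, ← sum_neg_distrib]
    exact sum_congr rfl fun j _ => by rw [exp_eq_sum_exp_mul_softmax s j]; ring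
  rw [hweights, hweights, neg_le_neg_iff]
  exact mul_le_mul_of_nonneg_left gibbs (sum_exp_pos s).le

end Softmax

lemma sum_apply_eq_of_comp_perm {ι Y : Type*} [Fintype ι] [DecidableEq ι] [Fintype Y]
    (g : (ι → Y) → ι → ℝ) (hg : ∀ C (σ : Equiv.Perm ι) j, g (C ∘ σ) j = g C (σ j)) (i j : ι) :
    ∑ C, g C i = ∑ C, g C j := by
  rw [← Equiv.sum_comp ((Equiv.swap i j).arrowCongr (Equiv.refl Y)).symm]
  refine sum_congr rfl fun C _ => ?_
  change g (C ∘ Equiv.swap i j) i = g C j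
  rw [hg, Equiv.swap_apply_left]

lemma card_mul_sum_apply_eq_sum_sum {ι Y : Type*} [Fintype ι] [DecidableEq ι] [Fintype Y]
    (g : (ι → Y) → ι → ℝ) (hg : ∀ C (σ : Equiv.Perm ι) j, g (C ∘ σ) j = g C (σ j)) (i : ι) :
    (Fintype.card ι : ℝ) * ∑ C, g C i = ∑ C, ∑ j, g C j := by
  rw [sum_comm, ← nsmul_eq_mul, ← card_univ, ← sum_const]
  exact sum_congr rfl fun j _ => sum_apply_eq_of_comp_perm g hg i j

section Contrastive

variable {Y : Type*} [Fintype Y] [DecidableEq Y] {p_data q : Y → ℝ} {L : ℕ}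

lemma contrastiveJ_eq_sum_tuples (hq : ∀ y, q y ≠ 0) (θ : Y → ℝ) :
    contrastiveJ p_data q L θ = ∑ C : Fin (L + 1) → Y,
      (∏ i, q (C i)) * (p_data (C 0) / q (C 0) * -log (softmax (θ ∘ C) 0)) := by
  simp only [contrastiveJ, mul_sum]
  rw [sum_comm]
  refine sum_congr rfl fun C _ => ?_
  simp only [ite_mul, zero_mul, mul_ite, mul_zero, sum_ite_eq, mem_univ, if_true, softmax,
    Function.comp_apply]
  rw [Fin.prod_univ_succ]
  field_simp [hq (C 0)]

lemma succ_mul_contrastiveJ (hq : ∀ y, q y ≠ 0) (θ : Y → ℝ) :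
    ((L : ℝ) + 1) * contrastiveJ p_data q L θ = ∑ C : Fin (L + 1) → Y,
      (∏ i, q (C i)) * ∑ j, p_data (C j) / q (C j) * -log (softmax (θ ∘ C) j) := by
  have hsymm := card_mul_sum_apply_eq_sum_sum
    (fun (C : Fin (L + 1) → Y) j =>
      (∏ i, q (C i)) * (p_data (C j) / q (C j) * -log (softmax (θ ∘ C) j)))
    (fun C σ j => by
      simp only [Function.comp_apply, ← Function.comp_assoc, softmax_comp_perm,
        Equiv.prod_comp σ fun i => q (C i)]) (0 : Fin (L + 1))
  rw [Fintype.card_fin, Nat.cast_add_one] at hsymm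
  simp only [contrastiveJ_eq_sum_tuples hq, hsymm, mul_sum]

end Contrastive

theorem softmax_fit_minimizes_expected_contrastive_loss_general
    {Y : Type*} [Fintype Y] [DecidableEq Y]
    (p_data q : Y → ℝ)
    (hq_pos : ∀ y, 0 < q y)
    (L : ℕ) (φ : Y → ℝ)
    (hfit : ∃ c : ℝ, 0 < c ∧ ∀ y, Real.exp (φ y) = c * (p_data y / q y)) :
    ∀ ψ : Y → ℝ, contrastiveJ p_data q L φ ≤ contrastiveJ p_data q L ψ := by
  intro ψ
  obtain ⟨c, hc, hφ⟩ := hfit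
  have hq : ∀ y, q y ≠ 0 := fun y => (hq_pos y).ne'
  have hweight : ∀ y, p_data y / q y = c⁻¹ * exp (φ y) := fun y => by
    rw [hφ, inv_mul_cancel_left₀ hc.ne']
  refine le_of_mul_le_mul_left ?_ (by positivity : (0 : ℝ) < L + 1)
  rw [succ_mul_contrastiveJ hq, succ_mul_contrastiveJ hq]
  refine sum_le_sum fun C _ =>
    mul_le_mul_of_nonneg_left ?_ (prod_nonneg fun i _ => (hq_pos (C i)).le)
  simp only [hweight, mul_assoc, ← mul_sum]
  exact mul_le_mul_of_nonneg_left (sum_exp_mul_neg_log_softmax_le (φ ∘ C) (ψ ∘ C)) (by positivity)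

theorem softmax_fit_minimizes_expected_contrastive_loss
    {Y : Type*} [Fintype Y] [DecidableEq Y] [Nonempty Y]
    (p_data q : Y → ℝ)
    (hpd_pos : ∀ y, 0 < p_data y) (hpd_sum : ∑ y, p_data y = 1)
    (hq_pos : ∀ y, 0 < q y) (hq_sum : ∑ y, q y = 1)
    (L : ℕ) (hL : 1 ≤ L) (φ : Y → ℝ)
    (hfit : ∃ c : ℝ, 0 < c ∧ ∀ y, Real.exp (φ y) = c * (p_data y / q y)) :
    ∀ ψ : Y → ℝ, contrastiveJ p_data q L φ ≤ contrastiveJ p_data q L ψ :=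
  softmax_fit_minimizes_expected_contrastive_loss_general p_data q hq_pos L φ hfit
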